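/- arXiv:1005.1285 — 2 statements merged into one kernel-verified Lean document; each statement's English description precedes it below -/
import Mathlib

section
/- Let k ≥ 1 be a fixed integer and λ > 0. Define f_k(λ) = Σ_{i≥k} λ^i/i!. Then the function λ ↦ λ f_{k−1}(λ)/f_k(λ) is strictly increasing on (0,∞), tends to k as λ → 0⁺, and tends to ∞ as λ → ∞; consequently, for every c > k there is a unique λ > 0 with c = λ f_{k−1}(λ)/f_k(λ). -/
/-!
Write `a i = 1 / i!` for `i ≥ k` and `a i = 0` otherwise. Then `f_k(t) = ∑ a_i t^i` and
`t f_{k-1}(t) = ∑ i a_i t^i`, so the map is the mean of the weights `a_i t^i`. Monotonicity is the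
positivity, for `x < y`, of `∑_{m,n} m a_m a_n (y^m x^n - x^m y^n)`: pairing the terms `(m, n)` and
`(n, m)` gives `a_m a_n (m - n) (y^m x^n - x^m y^n) ≥ 0`. The mean is at least `k` because the
weights live on `i ≥ k`, and `f_{k-1}(t) = t^{k-1}/(k-1)! + f_k(t)` with `f_k(t) ≥ t^k/k!` puts it
between `t` and `t + k`; this gives both limits.
-/

open Real Filter

/-- `fk k x = ∑_{i ≥ k} x^i / i!`, the tail of the exponential series. -/
noncomputable def fk (k : ℕ) (x : ℝ) : ℝ :=
  ∑' i : ℕ, if k ≤ i then x ^ i / (Nat.factorial i : ℝ) else 0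

open Set
open scoped Nat Topology

lemma StrictMonoOn.existsUnique_eq_of_tendsto {f : ℝ → ℝ} {b L c : ℝ}
    (hf : StrictMonoOn f (Ioi b)) (hcont : ContinuousOn f (Ioi b))
    (hb : Tendsto f (𝓝[>] b) (𝓝 L)) (htop : Tendsto f atTop atTop) (hc : L < c) :
    ∃! t, b < t ∧ c = f t := by
  obtain ⟨s, hsc, hs⟩ : ∃ s, f s < c ∧ b < s :=
    ((hb.eventually_lt_const hc).and self_mem_nhdsWithin).exists
  obtain ⟨u, hcu, hsu⟩ : ∃ u, c < f u ∧ s ≤ u :=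
    ((htop.eventually_gt_atTop c).and (eventually_ge_atTop s)).exists
  obtain ⟨t, hst, hft⟩ := intermediate_value_Icc hsu
    (hcont.mono fun x hx => hs.trans_le hx.1) ⟨hsc.le, hcu.le⟩
  have hbt : b < t := hs.trans_le hst.1
  exact ⟨t, ⟨hbt, hft.symm⟩, fun t' ⟨hbt', hft'⟩ => hf.injOn hbt' hbt (hft'.symm.trans hft.symm)⟩

section TiltedMean

variable {a : ℕ → ℝ} {x y : ℝ}

lemma pow_mul_pow_sub_pow_mul_pow_nonneg (hx : 0 ≤ x) (hxy : x ≤ y) {m n : ℕ} (hnm : n ≤ m) :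
    0 ≤ y ^ m * x ^ n - x ^ m * y ^ n := by
  obtain ⟨c, rfl⟩ := Nat.exists_eq_add_of_le hnm
  have : x ^ c ≤ y ^ c := pow_le_pow_left₀ hx hxy c
  calc 0 ≤ x ^ n * y ^ n * (y ^ c - x ^ c) := by
        have := hx.trans hxy
        apply mul_nonneg (by positivity); linarith
    _ = y ^ (n + c) * x ^ n - x ^ (n + c) * y ^ n := by ring

lemma pow_mul_pow_sub_pow_mul_pow_pos (hx : 0 < x) (hxy : x < y) {m n : ℕ} (hnm : n < m) :
    0 < y ^ m * x ^ n - x ^ m * y ^ n := by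
  obtain ⟨c, rfl⟩ := Nat.exists_eq_add_of_lt hnm
  have : x ^ (c + 1) < y ^ (c + 1) := pow_lt_pow_left₀ hxy hx.le (Nat.succ_ne_zero c)
  calc 0 < x ^ n * y ^ n * (y ^ (c + 1) - x ^ (c + 1)) := by
        have := hx.trans hxy
        apply mul_pos (by positivity); linarith
    _ = y ^ (n + c + 1) * x ^ n - x ^ (n + c + 1) * y ^ n := by ring

lemma sub_mul_pow_mul_pow_sub_nonneg (hx : 0 ≤ x) (hxy : x ≤ y) (m n : ℕ) :
    0 ≤ ((m : ℝ) - n) * (y ^ m * x ^ n - x ^ m * y ^ n) := by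
  rcases le_total n m with h | h
  · exact mul_nonneg (by simpa using h) (pow_mul_pow_sub_pow_mul_pow_nonneg hx hxy h)
  · calc 0 ≤ ((n : ℝ) - m) * (y ^ n * x ^ m - x ^ n * y ^ m) :=
          mul_nonneg (by simpa using h) (pow_mul_pow_sub_pow_mul_pow_nonneg hx hxy h)
      _ = _ := by ring

lemma tsum_pos_of_add_swap {α : Type*} {F : α × α → ℝ} (hF : Summable F)
    (hnonneg : ∀ p, 0 ≤ F p + F p.swap) (p : α × α) (hp : 0 < F p + F p.swap) :
    0 < ∑' q, F q := by
  have hswap : Summable fun q : α × α => F q.swap := (Equiv.prodComm α α).summable_iff.mpr hF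
  have := (hF.add hswap).tsum_pos hnonneg p hp
  have hswap_eq : ∑' q : α × α, F q.swap = ∑' q, F q := (Equiv.prodComm α α).tsum_eq F
  rw [hF.tsum_add hswap, hswap_eq] at this
  linarith

variable (ha : ∀ i, 0 ≤ a i) (hA : ∀ t, 0 ≤ t → Summable fun i => a i * t ^ i)
  (hB : ∀ t, 0 ≤ t → Summable fun i : ℕ => (i : ℝ) * a i * t ^ i)
include ha hA hB

lemma tsum_mul_tsum_lt_tsum_mul_tsum (hx : 0 < x) (hxy : x < y) {m n : ℕ} (hnm : n < m)
    (han : 0 < a n) (ham : 0 < a m) :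
    (∑' i : ℕ, (i : ℝ) * a i * x ^ i) * ∑' i, a i * y ^ i <
      (∑' i : ℕ, (i : ℝ) * a i * y ^ i) * ∑' i, a i * x ^ i := by
  have hy : 0 ≤ y := hx.le.trans hxy.le
  have hA0 : ∀ t, 0 ≤ t → 0 ≤ fun i => a i * t ^ i := fun t ht i => by
    have := ha i; positivity
  have hB0 : ∀ t, 0 ≤ t → 0 ≤ fun i : ℕ => (i : ℝ) * a i * t ^ i := fun t ht i => by
    have := ha i; positivity
  have hyx := (hB y hy).mul_of_nonneg (hA x hx.le) (hB0 y hy) (hA0 x hx.le)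
  have hxy' := (hB x hx.le).mul_of_nonneg (hA y hy) (hB0 x hx.le) (hA0 y hy)
  let F : ℕ × ℕ → ℝ := fun p =>
    p.1 * a p.1 * y ^ p.1 * (a p.2 * x ^ p.2) - p.1 * a p.1 * x ^ p.1 * (a p.2 * y ^ p.2)
  have hF : Summable F := hyx.sub hxy'
  have hswap (p : ℕ × ℕ) : F p + F p.swap =
      a p.1 * a p.2 * (((p.1 : ℝ) - p.2) * (y ^ p.1 * x ^ p.2 - x ^ p.1 * y ^ p.2)) := by
    simp only [F, Prod.fst_swap, Prod.snd_swap]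
    ring
  have hpos : 0 < ∑' p, F p := by
    refine tsum_pos_of_add_swap hF (fun p => ?_) (m, n) ?_ <;> rw [hswap]
    · exact mul_nonneg (mul_nonneg (ha _) (ha _)) (sub_mul_pow_mul_pow_sub_nonneg hx.le hxy.le _ _)
    · have : (0 : ℝ) < m - n := sub_pos.2 (by exact_mod_cast hnm)
      have := pow_mul_pow_sub_pow_mul_pow_pos hx hxy hnm
      positivity
  rw [hyx.tsum_sub hxy', ← (hB y hy).tsum_mul_tsum (hA x hx.le) hyx,
    ← (hB x hx.le).tsum_mul_tsum (hA y hy) hxy'] at hpos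
  linarith

lemma strictMonoOn_tsum_div_tsum {m n : ℕ} (hnm : n < m) (han : 0 < a n) (ham : 0 < a m) :
    StrictMonoOn (fun t => (∑' i : ℕ, (i : ℝ) * a i * t ^ i) / ∑' i, a i * t ^ i) (Ioi 0) := by
  have hpos (t : ℝ) (ht : 0 < t) : 0 < ∑' i, a i * t ^ i :=
    (hA t ht.le).tsum_pos (fun i => mul_nonneg (ha i) (pow_nonneg ht.le i)) n (by positivity)
  intro x hx y hy hxy
  exact (div_lt_div_iff₀ (hpos x hx) (hpos y hy)).2
    (tsum_mul_tsum_lt_tsum_mul_tsum ha hA hB hx hxy hnm han ham)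

lemma natCast_mul_tsum_le_tsum {k : ℕ} (hk : ∀ i < k, a i = 0) {t : ℝ} (ht : 0 ≤ t) :
    k * ∑' i, a i * t ^ i ≤ ∑' i : ℕ, (i : ℝ) * a i * t ^ i := by
  rw [← tsum_mul_left]
  refine ((hA t ht).mul_left (k : ℝ)).tsum_le_tsum (fun i => ?_) (hB t ht)
  rcases lt_or_ge i k with hi | hi
  · simp [hk i hi]
  · rw [mul_assoc]
    have := ha i
    gcongr

end TiltedMean

noncomputable def expTailCoeff (k i : ℕ) : ℝ := if k ≤ i then (i ! : ℝ)⁻¹ else 0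

lemma expTailCoeff_nonneg (k i : ℕ) : 0 ≤ expTailCoeff k i := by
  unfold expTailCoeff; split_ifs <;> positivity

lemma expTailCoeff_self_pos (k : ℕ) : 0 < expTailCoeff k k := by
  simp only [expTailCoeff, le_refl, if_true]; positivity

lemma expTailCoeff_succ_pos (k : ℕ) : 0 < expTailCoeff k (k + 1) := by
  simp only [expTailCoeff, Nat.le_succ, if_true]; positivity

lemma expTailCoeff_of_lt {k i : ℕ} (h : i < k) : expTailCoeff k i = 0 := if_neg (by omega)

lemma succ_mul_expTailCoeff_succ (j i : ℕ) :
    ((i : ℝ) + 1) * expTailCoeff (j + 1) (i + 1) = expTailCoeff j i := by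
  simp only [expTailCoeff, Nat.add_le_add_iff_right, Nat.factorial_succ]
  split_ifs
  · push_cast; field_simp
  · simp

lemma fk_eq_tsum (k : ℕ) (x : ℝ) : fk k x = ∑' i, expTailCoeff k i * x ^ i :=
  tsum_congr fun i => by unfold expTailCoeff; split_ifs <;> simp [div_eq_inv_mul]

lemma summable_expTailCoeff_mul_pow (k : ℕ) (x : ℝ) :
    Summable fun i => expTailCoeff k i * x ^ i := by
  refine .of_norm_bounded (Real.summable_pow_div_factorial |x|) fun i => ?_
  unfold expTailCoeff
  split_ifs
  · rw [Real.norm_eq_abs, abs_mul, abs_pow, abs_inv, Nat.abs_cast, inv_mul_eq_div]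
  · rw [zero_mul, norm_zero]; positivity

lemma hasSum_natCast_mul_expTailCoeff_mul_pow {k : ℕ} (hk : 0 < k) (x : ℝ) :
    HasSum (fun i : ℕ => (i : ℝ) * expTailCoeff k i * x ^ i) (x * fk (k - 1) x) := by
  obtain ⟨j, rfl⟩ : ∃ j, k = j + 1 := ⟨k - 1, by omega⟩
  have hshift : (fun i : ℕ => ((i + 1 : ℕ) : ℝ) * expTailCoeff (j + 1) (i + 1) * x ^ (i + 1)) =
      fun i => x * (expTailCoeff j i * x ^ i) := by
    funext i
    rw [Nat.cast_succ, ← succ_mul_expTailCoeff_succ j i, pow_succ]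
    ring
  rw [← hasSum_nat_add_iff' 1, hshift, Nat.add_sub_cancel, fk_eq_tsum]
  simpa using (summable_expTailCoeff_mul_pow j x).hasSum.mul_left x

lemma fk_zero (x : ℝ) : fk 0 x = exp x := by
  simp only [fk, zero_le, if_true, Real.exp_eq_exp_ℝ]
  exact (NormedSpace.expSeries_div_hasSum_exp x).tsum_eq

lemma fk_eq_add_fk_succ (k : ℕ) (x : ℝ) : fk k x = x ^ k / k ! + fk (k + 1) x := by
  have hsplit (i : ℕ) : expTailCoeff k i * x ^ i =
      (if i = k then x ^ k / k ! else 0) + expTailCoeff (k + 1) i * x ^ i := by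
    unfold expTailCoeff
    rcases lt_trichotomy i k with h | rfl | h
    · simp [h.ne, h.not_ge, show ¬k + 1 ≤ i by omega]
    · simp [div_eq_inv_mul]
    · simp [h.ne', h.le, Nat.succ_le_of_lt h]
  rw [fk_eq_tsum, fk_eq_tsum, tsum_congr hsplit,
    Summable.tsum_add _ (summable_expTailCoeff_mul_pow _ _), tsum_ite_eq]
  exact summable_of_ne_finset_zero (s := {k}) (by simp +contextual)

lemma continuous_fk (k : ℕ) : Continuous (fk k) := by
  induction k with
  | zero => simpa [funext fk_zero] using continuous_exp
  | succ k ih =>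
    have : fk (k + 1) = fun x => fk k x - x ^ k / k ! := by
      ext x; rw [fk_eq_add_fk_succ k x]; ring
    rw [this]
    fun_prop

lemma fk_pos (k : ℕ) {x : ℝ} (hx : 0 < x) : 0 < fk k x := by
  rw [fk_eq_tsum]
  exact (summable_expTailCoeff_mul_pow k x).tsum_pos
    (fun i => mul_nonneg (expTailCoeff_nonneg k i) (pow_nonneg hx.le i)) k
    (mul_pos (expTailCoeff_self_pos k) (pow_pos hx k))

lemma pow_div_factorial_le_fk (k : ℕ) {x : ℝ} (hx : 0 ≤ x) : x ^ k / k ! ≤ fk k x := by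
  rw [fk_eq_tsum]
  calc x ^ k / k ! = expTailCoeff k k * x ^ k := by simp [expTailCoeff, div_eq_inv_mul]
    _ ≤ _ := (summable_expTailCoeff_mul_pow k x).le_tsum k
      (fun i _ => mul_nonneg (expTailCoeff_nonneg k i) (pow_nonneg hx i))

lemma fk_sub_one {k : ℕ} (hk : 0 < k) (x : ℝ) :
    fk (k - 1) x = x ^ (k - 1) / (k - 1)! + fk k x := by
  rw [fk_eq_add_fk_succ, Nat.sub_add_cancel hk]

noncomputable def truncPoissonMean (k : ℕ) (t : ℝ) : ℝ := t * fk (k - 1) t / fk k t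

lemma continuousOn_truncPoissonMean (k : ℕ) : ContinuousOn (truncPoissonMean k) (Ioi 0) :=
  ((continuous_id.mul (continuous_fk _)).continuousOn).div (continuous_fk k).continuousOn
    fun _ ht => (fk_pos k ht).ne'

section

variable {k : ℕ} (hk : 0 < k)
include hk

lemma truncPoissonMean_eq_tsum_div :
    truncPoissonMean k =
      fun t => (∑' i : ℕ, (i : ℝ) * expTailCoeff k i * t ^ i) / ∑' i, expTailCoeff k i * t ^ i := by
  funext t
  rw [truncPoissonMean, (hasSum_natCast_mul_expTailCoeff_mul_pow hk t).tsum_eq, fk_eq_tsum k t]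

lemma strictMonoOn_truncPoissonMean : StrictMonoOn (truncPoissonMean k) (Ioi 0) := by
  rw [truncPoissonMean_eq_tsum_div hk]
  exact strictMonoOn_tsum_div_tsum (expTailCoeff_nonneg k)
    (fun t _ => summable_expTailCoeff_mul_pow k t)
    (fun t _ => (hasSum_natCast_mul_expTailCoeff_mul_pow hk t).summable)
    k.lt_succ_self (expTailCoeff_self_pos k) (expTailCoeff_succ_pos k)

lemma natCast_le_truncPoissonMean {t : ℝ} (ht : 0 < t) : k ≤ truncPoissonMean k t := by
  rw [truncPoissonMean_eq_tsum_div hk, le_div_iff₀ (fk_eq_tsum k t ▸ fk_pos k ht)]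
  exact natCast_mul_tsum_le_tsum (expTailCoeff_nonneg k)
    (fun t _ => summable_expTailCoeff_mul_pow k t)
    (fun t _ => (hasSum_natCast_mul_expTailCoeff_mul_pow hk t).summable)
    (fun _ => expTailCoeff_of_lt) ht.le

lemma truncPoissonMean_eq_add {t : ℝ} (ht : 0 < t) :
    truncPoissonMean k t = t + t ^ k / ((k - 1)! * fk k t) := by
  have := (fk_pos k ht).ne'
  rw [truncPoissonMean, fk_sub_one hk, ← mul_pow_sub_one hk.ne' t]
  field_simp
  ring

lemma self_le_truncPoissonMean {t : ℝ} (ht : 0 < t) : t ≤ truncPoissonMean k t := by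
  have := fk_pos k ht
  rw [truncPoissonMean_eq_add hk ht]
  exact le_add_of_nonneg_right (by positivity)

lemma truncPoissonMean_le_add_natCast {t : ℝ} (ht : 0 < t) : truncPoissonMean k t ≤ t + k := by
  have hfk := fk_pos k ht
  rw [truncPoissonMean_eq_add hk ht, add_le_add_iff_left, div_le_iff₀ (by positivity),
    ← mul_assoc, ← Nat.cast_mul, Nat.mul_factorial_pred hk.ne', ← div_le_iff₀' (by positivity)]
  exact pow_div_factorial_le_fk k ht.le

lemma tendsto_truncPoissonMean_nhdsGT_zero :
    Tendsto (truncPoissonMean k) (𝓝[>] 0) (𝓝 k) := by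
  have hup : Tendsto (fun t : ℝ => t + k) (𝓝[>] 0) (𝓝 k) := by
    simpa using (tendsto_id.add_const (k : ℝ)).mono_left (nhdsWithin_le_nhds (a := (0 : ℝ)))
  exact tendsto_of_tendsto_of_tendsto_of_le_of_le' tendsto_const_nhds hup
    (eventually_mem_nhdsWithin.mono fun _ ht => natCast_le_truncPoissonMean hk ht)
    (eventually_mem_nhdsWithin.mono fun _ ht => truncPoissonMean_le_add_natCast hk ht)

lemma tendsto_truncPoissonMean_atTop : Tendsto (truncPoissonMean k) atTop atTop :=
  tendsto_atTop_mono' atTop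
    ((eventually_gt_atTop 0).mono fun _ ht => self_le_truncPoissonMean hk ht) tendsto_id

end

/-- For fixed `k ≥ 1`, the function `λ ↦ λ f_{k-1}(λ) / f_k(λ)` is strictly increasing on
`(0, ∞)`, tends to `k` as `λ → 0⁺`, tends to `∞` as `λ → ∞`, and consequently for every
`c > k` there is a unique `λ > 0` with `c = λ f_{k-1}(λ) / f_k(λ)`. -/
theorem stmt_1 (k : ℕ) (hk : 1 ≤ k) :
    StrictMonoOn (fun l : ℝ => l * fk (k - 1) l / fk k l) (Set.Ioi 0) ∧
    Tendsto (fun l : ℝ => l * fk (k - 1) l / fk k l) (nhdsWithin 0 (Set.Ioi 0)) (nhds (k : ℝ)) ∧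
    Tendsto (fun l : ℝ => l * fk (k - 1) l / fk k l) atTop atTop ∧
    (∀ c : ℝ, (k : ℝ) < c → ∃! l : ℝ, 0 < l ∧ c = l * fk (k - 1) l / fk k l) :=
  have hmono := strictMonoOn_truncPoissonMean hk
  have hzero := tendsto_truncPoissonMean_nhdsGT_zero hk
  have htop := tendsto_truncPoissonMean_atTop hk
  ⟨hmono, hzero, htop, fun _ hc =>
    hmono.existsUnique_eq_of_tendsto (continuousOn_truncPoissonMean k) hzero htop hc⟩
end

section
/- A digraph G with all in-degrees and out-degrees at least 1 is strongly connected if and only if either G is a single directed cycle, or G is a preheart (has no directed-cycle component) and its heart H(G) is strongly connected. -/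
/-!
If every vertex reachable from `v` has out-degree at least 1 and in-degree at most 1, then
"pick an out-neighbour" is an injective, hence (by finiteness) surjective, self-map of the
set reachable from `v`; so that set is also closed under in-neighbours and contains every
vertex weakly connected to `v`. For a single cycle this turns weak into strong connectivity;
in a preheart it lets every vertex reach, and be reached from, a heart vertex. Heart arcs
are directed paths, and conversely a directed path between heart vertices splits into heart
arcs at the heart vertices it visits.
-/

section

variable {V : Type*}

/-- Out-degree of a vertex. -/
noncomputable def outdeg (A : V → V → Prop) (v : V) : ℕ := Nat.card {w : V // A v w}

/-- In-degree of a vertex. -/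
noncomputable def indeg (A : V → V → Prop) (v : V) : ℕ := Nat.card {u : V // A u v}

/-- A vertex of the heart: total degree at least 3. -/
def bigVx (A : V → V → Prop) (v : V) : Prop := 3 ≤ outdeg A v + indeg A v

/-- Arcs of the heart `H(G)`: a directed path between heart vertices all of whose internal
vertices have total degree 2 (in- and out-degree 1). -/
def heartArc (A : V → V → Prop) (u w : V) : Prop :=
  bigVx A u ∧ bigVx A w ∧
    ∃ v : V, Relation.ReflTransGen (fun a b => A a b ∧ ¬ bigVx A b) u v ∧ A v w

open Relation

section

variable {A : V → V → Prop}

theorem exists_adj_of_one_le_outdeg {v : V} (h : 1 ≤ outdeg A v) : ∃ w, A v w :=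
  let ⟨⟨w, hw⟩⟩ := (Nat.card_pos_iff.mp h).1
  ⟨w, hw⟩

theorem eq_of_adj_of_indeg_le_one [Finite V] {u u' v : V} (h : indeg A v ≤ 1)
    (hu : A u v) (hu' : A u' v) : u = u' :=
  have := Finite.card_le_one_iff_subsingleton.mp h
  congrArg Subtype.val (Subsingleton.elim (⟨u, hu⟩ : {u // A u v}) ⟨u', hu'⟩)

theorem bigVx_swap {v : V} : bigVx (fun a b => A b a) v ↔ bigVx A v := by
  rw [bigVx, bigVx, add_comm]
  rfl

theorem mem_of_adj_of_forall_adj_mem [Finite V] {S : Set V}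
    (hclosed : ∀ x ∈ S, ∀ y, A x y → y ∈ S) (hout : ∀ x ∈ S, 1 ≤ outdeg A x)
    (hin : ∀ x ∈ S, indeg A x ≤ 1) {x y : V} (hy : y ∈ S) (hxy : A x y) : x ∈ S := by
  have hsucc : ∀ z : S, ∃ w : S, A z w := fun z =>
    let ⟨w, hw⟩ := exists_adj_of_one_le_outdeg (hout z z.2)
    ⟨⟨w, hclosed z z.2 w hw⟩, hw⟩
  choose f hf using hsucc
  have hinj : f.Injective := fun a b hab =>
    Subtype.ext (eq_of_adj_of_indeg_le_one (hin _ (f a).2) (hf a) (hab ▸ hf b))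
  obtain ⟨z, hz⟩ := Finite.injective_iff_surjective.mp hinj ⟨y, hy⟩
  have hzy : A z y := by simpa only [hz] using hf z
  exact eq_of_adj_of_indeg_le_one (hin y hy) hxy hzy ▸ z.2

theorem Relation.ReflTransGen.of_symm_of_outdeg_indeg [Finite V] {v w : V}
    (hout : ∀ x, ReflTransGen A v x → 1 ≤ outdeg A x)
    (hin : ∀ x, ReflTransGen A v x → indeg A x ≤ 1)
    (hw : ReflTransGen (fun a b => A a b ∨ A b a) v w) : ReflTransGen A v w := by
  induction hw with
  | refl => exact .refl
  | tail _ hbc ih =>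
    rcases hbc with hbc | hcb
    · exact ih.tail hbc
    · exact mem_of_adj_of_forall_adj_mem (S := {x | ReflTransGen A v x})
        (fun _ hx _ hxy => hx.tail hxy) hout hin ih hcb

theorem exists_reflTransGen_bigVx [Finite V] (hout : ∀ v, 1 ≤ outdeg A v) {v w : V}
    (hw : ReflTransGen (fun a b => A a b ∨ A b a) v w) (hbig : bigVx A w) :
    ∃ x, ReflTransGen A v x ∧ bigVx A x := by
  by_contra! hsmall
  have hin_le : ∀ x, ReflTransGen A v x → indeg A x ≤ 1 := fun x hx => by
    have := hsmall x hx
    have := hout x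
    unfold bigVx at *
    omega
  exact hsmall w (.of_symm_of_outdeg_indeg (fun x _ => hout x) hin_le hw) hbig

theorem exists_bigVx_reflTransGen [Finite V] (hin : ∀ v, 1 ≤ indeg A v) {v w : V}
    (hw : ReflTransGen (fun a b => A a b ∨ A b a) v w) (hbig : bigVx A w) :
    ∃ x, bigVx A x ∧ ReflTransGen A x v := by
  obtain ⟨x, hvx, hx⟩ := exists_reflTransGen_bigVx (A := fun a b => A b a) hin
    (ReflTransGen.mono (fun _ _ => Or.symm) _ _ hw) (bigVx_swap.mpr hbig)
  exact ⟨x, bigVx_swap.mp hx, reflTransGen_swap.mp hvx⟩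

theorem reflTransGen_of_heartArc {u w : V} (h : heartArc A u w) : ReflTransGen A u w :=
  let ⟨_, _, _, hv, hvw⟩ := h
  (ReflTransGen.mono (fun _ _ => And.left) _ _ hv).tail hvw

theorem Relation.ReflTransGen.of_heartArc {u w : V} (h : ReflTransGen (heartArc A) u w) :
    ReflTransGen A u w :=
  reflTransGen_closed (fun _ _ => reflTransGen_of_heartArc) _ _ h

theorem exists_heartArc_path_of_reflTransGen {u v : V} (hu : bigVx A u)
    (h : ReflTransGen A u v) : ∃ x, bigVx A x ∧ ReflTransGen (heartArc A) u x ∧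
      ReflTransGen (fun a b => A a b ∧ ¬ bigVx A b) x v := by
  induction h with
  | refl => exact ⟨u, hu, .refl, .refl⟩
  | @tail b c _ hbc ih =>
    obtain ⟨x, hx, hux, hxb⟩ := ih
    by_cases hc : bigVx A c
    · exact ⟨c, hc, hux.tail ⟨hx, hc, b, hxb, hbc⟩, .refl⟩
    · exact ⟨x, hx, hux, hxb.tail ⟨hbc, hc⟩⟩

theorem Relation.ReflTransGen.heartArc_of_bigVx {u w : V} (hu : bigVx A u) (hw : bigVx A w)
    (h : ReflTransGen A u w) : ReflTransGen (heartArc A) u w := by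
  obtain ⟨x, -, hux, hxw⟩ := exists_heartArc_path_of_reflTransGen hu h
  rcases hxw.cases_tail with rfl | ⟨_, _, -, hw'⟩
  · exact hux
  · exact absurd hw hw'

end

/-- A digraph `G` with all in-degrees and out-degrees at least 1 is strongly connected iff
either `G` is a single directed cycle (all in- and out-degrees equal to 1 and `G` weakly
connected), or `G` is a preheart (every vertex weakly reaches a vertex of total degree at
least 3, i.e. no directed-cycle component) and its heart `H(G)` is strongly connected. -/
theorem stmt_17 [Fintype V] (A : V → V → Prop)
    (hout : ∀ v : V, 1 ≤ outdeg A v) (hin : ∀ v : V, 1 ≤ indeg A v) :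
    (∀ u v : V, Relation.ReflTransGen A u v) ↔
      ((∀ v : V, outdeg A v = 1 ∧ indeg A v = 1) ∧
        ∀ u v : V, Relation.ReflTransGen (fun a b => A a b ∨ A b a) u v) ∨
      ((∀ v : V, ∃ w : V, Relation.ReflTransGen (fun a b => A a b ∨ A b a) v w ∧ bigVx A w) ∧
        ∀ u w : V, bigVx A u → bigVx A w → Relation.ReflTransGen (heartArc A) u w) := by
  constructor
  · intro hstrong
    have hweak u v : ReflTransGen (fun a b => A a b ∨ A b a) u v :=
      ReflTransGen.mono (fun _ _ => Or.inl) _ _ (hstrong u v)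
    by_cases hdeg : ∀ v, outdeg A v = 1 ∧ indeg A v = 1
    · exact .inl ⟨hdeg, hweak⟩
    obtain ⟨v₀, hv₀⟩ := not_forall.mp hdeg
    have hbig : bigVx A v₀ := by
      have := hout v₀
      have := hin v₀
      unfold bigVx
      omega
    exact .inr ⟨fun v => ⟨v₀, hweak v v₀, hbig⟩,
      fun u w hu hw => (hstrong u w).heartArc_of_bigVx hu hw⟩
  · rintro (⟨hdeg, hweak⟩ | ⟨hpre, hheart⟩) u v
    · exact .of_symm_of_outdeg_indeg (fun x _ => (hdeg x).1.ge) (fun x _ => (hdeg x).2.le)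
        (hweak u v)
    · obtain ⟨_, hu, hbig⟩ := hpre u
      obtain ⟨x, hux, hx⟩ := exists_reflTransGen_bigVx hout hu hbig
      obtain ⟨_, hv, hbig'⟩ := hpre v
      obtain ⟨y, hy, hyv⟩ := exists_bigVx_reflTransGen hin hv hbig'
      exact (hux.trans (hheart x y hx hy).of_heartArc).trans hyv

end
end
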